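/- arXiv:2602.00206 — 8 statements merged into one kernel-verified Lean document; each statement's English description precedes it below -/
import Mathlib

section
/- Let p be prime, 1 ≤ r < p, and 0 < t < r. Then the binomial coefficient C(r(p−1), t(p−1)) is divisible by p. -/
noncomputable section

/-- `i` in the Gaussian integers. -/
def Ig : GaussianInt := ⟨0, 1⟩

/-- Classical power sum `S_r(N) = ∑_{t=1}^N t^r`. -/
def Sps (r N : ℕ) : ℤ := ∑ t ∈ Finset.Icc 1 N, (t : ℤ) ^ r

/-- Gaussian power sum `F_n(k,m) = ∑_{a=1}^k ∑_{b=1}^m (a+bi)^n`. -/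
def Fg (n k m : ℕ) : GaussianInt :=
  ∑ a ∈ Finset.Icc 1 k, ∑ b ∈ Finset.Icc 1 m, ((a : GaussianInt) + (b : GaussianInt) * Ig) ^ n

/-- Square Gaussian power sum `G_n(N) = F_n(N-1,N-1)`. -/
def Gg (n N : ℕ) : GaussianInt := Fg n (N - 1) (N - 1)

theorem stmt4 (p r t : ℕ) (hp : p.Prime) (hr1 : 1 ≤ r) (hrp : r < p)
    (ht0 : 0 < t) (htr : t < r) :
    p ∣ Nat.choose (r * (p - 1)) (t * (p - 1)) := by
  haveI : Fact p.Prime := ⟨hp⟩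
  have hp1 : 1 ≤ p := hp.one_lt.le
  have hdec : ∀ s : ℕ, 1 ≤ s → s ≤ p → s * (p - 1) = (s - 1) * p + (p - s) := by
    intro s hs hsp
    obtain ⟨s', rfl⟩ := Nat.exists_eq_add_of_le hs
    obtain ⟨p', rfl⟩ := Nat.exists_eq_add_of_le hp1
    simp only [Nat.add_sub_cancel_left, Nat.add_mul, Nat.mul_add]
    omega
  have hn := hdec r hr1 hrp.le
  have hk := hdec t ht0 (by omega)
  have hnmod : r * (p - 1) % p = p - r := by
    rw [hn, Nat.add_comm, Nat.add_mul_mod_self_right]; exact Nat.mod_eq_of_lt (by omega)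
  have hndiv : r * (p - 1) / p = r - 1 := by
    rw [hn, Nat.add_comm, Nat.add_mul_div_right _ _ (by omega : 0 < p),
      Nat.div_eq_of_lt (by omega)]; omega
  have hkmod : t * (p - 1) % p = p - t := by
    rw [hk, Nat.add_comm, Nat.add_mul_mod_self_right]; exact Nat.mod_eq_of_lt (by omega)
  have hkdiv : t * (p - 1) / p = t - 1 := by
    rw [hk, Nat.add_comm, Nat.add_mul_div_right _ _ (by omega : 0 < p),
      Nat.div_eq_of_lt (by omega)]; omega
  have h := Choose.choose_modEq_choose_mod_mul_choose_div
    (n := r * (p - 1)) (k := t * (p - 1)) (p := p)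
  rw [hnmod, hndiv, hkmod, hkdiv] at h
  have hzero : Nat.choose (p - r) (p - t) = 0 := Nat.choose_eq_zero_of_lt (by omega)
  simp only [hzero, Nat.cast_zero, zero_mul] at h
  have : (p : ℤ) ∣ (Nat.choose (r * (p - 1)) (t * (p - 1)) : ℤ) := by
    simpa using (Int.ModEq.dvd h)
  exact_mod_cast this
end
end

section
/- Let p be an odd prime and n = r(p−1) with 1 ≤ r < p. Then G_n(p) = ∑_{a=1}^{p-1} ∑_{b=1}^{p-1} (a+bi)^n satisfies G_n(p) ≡ 1 + i^{r(p−1)} (mod p) in ℤ[i]. -/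
noncomputable section

/-! Modulo `p` the power sum `S_k = ∑_{a=1}^{p-1} a ^ k` is `-1` when `p - 1 ∣ k` and `0`
otherwise. Expanding `(a + b i) ^ n` binomially, `G_n(p) ≡ ∑_j C(n, j) S_j S_{n-j} i^{n-j}`,
and since `p - 1 ∣ n` only the indices `j = t (p - 1)` survive, each with coefficient
`C(r (p - 1), t (p - 1)) i^{n-j}`. By Lucas' theorem these binomial coefficients vanish
mod `p` for `0 < t < r`, leaving `i^n + 1`. -/

open Finset

theorem Nat.Prime.dvd_choose_mul_sub_one {p r t : ℕ} (hp : p.Prime) (ht : 0 < t) (htr : t < r)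
    (hrp : r ≤ p) : p ∣ (r * (p - 1)).choose (t * (p - 1)) := by
  have : Fact p.Prime := ⟨hp⟩
  have digits : ∀ s, 0 < s → s ≤ p → s * (p - 1) / p = s - 1 ∧ s * (p - 1) % p = p - s := by
    intro s hs hsp
    refine (Nat.div_mod_unique hp.pos).2 ⟨?_, by omega⟩
    zify [hs, hsp, hp.one_le]
    ring
  have lucas := Choose.choose_modEq_choose_mod_mul_choose_div_nat (p := p)
    (n := r * (p - 1)) (k := t * (p - 1))
  rw [(digits r (ht.trans htr) hrp).2, (digits t ht (htr.le.trans hrp)).2,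
    Nat.choose_eq_zero_of_lt (n := p - r) (by omega), zero_mul] at lucas
  exact Nat.modEq_zero_iff_dvd.1 lucas

theorem sum_sum_add_mul_pow {R ι κ : Type*} [CommSemiring R] (s : Finset ι) (t : Finset κ)
    (f : ι → R) (g : κ → R) (x : R) (n : ℕ) :
    ∑ a ∈ s, ∑ b ∈ t, (f a + g b * x) ^ n =
      ∑ j ∈ range (n + 1), (∑ a ∈ s, f a ^ j) * (∑ b ∈ t, g b ^ (n - j)) * x ^ (n - j) *
        (n.choose j : R) := by
  simp_rw [add_pow, Finset.sum_mul_sum, Finset.sum_mul, mul_pow]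
  conv_rhs => rw [sum_comm]
  refine sum_congr rfl fun a _ => ?_
  rw [sum_comm]
  exact sum_congr rfl fun b _ => sum_congr rfl fun j _ => by ring

namespace ZMod

variable (p : ℕ) [Fact p.Prime]

theorem sum_Icc_natCast_pow (k : ℕ) :
    ∑ a ∈ Icc 1 (p - 1), (a : ZMod p) ^ k = if p - 1 ∣ k then -1 else 0 := by
  have units := FiniteField.sum_pow_units (ZMod p) k
  rw [ZMod.card] at units
  rw [← units]
  refine sum_bij' (fun a ha => Units.mk0 (a : ZMod p) ?_) (fun u _ => (u : ZMod p).val)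
    (fun _ _ => mem_univ _) ?_ ?_ ?_ ?_
  · rw [mem_Icc] at ha
    rw [Ne, ZMod.natCast_eq_zero_iff]
    exact Nat.not_dvd_of_pos_of_lt ha.1 (by omega)
  · intro u _
    have := ZMod.val_lt (u : ZMod p)
    have := (ZMod.val_ne_zero (u : ZMod p)).2 u.ne_zero
    rw [mem_Icc]
    omega
  · intro a ha
    exact ZMod.val_cast_of_lt (by rw [mem_Icc] at ha; omega)
  · intro u _
    ext
    simp
  · intro a _
    simp

end ZMod

namespace CharP

variable {R : Type*} [CommRing R] (p : ℕ) [Fact p.Prime] [CharP R p]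

theorem sum_Icc_natCast_pow (k : ℕ) :
    ∑ a ∈ Icc 1 (p - 1), (a : R) ^ k = if p - 1 ∣ k then -1 else 0 := by
  have h := congrArg (ZMod.castHom (dvd_refl p) R) (ZMod.sum_Icc_natCast_pow p k)
  simpa [apply_ite] using h

theorem sum_Icc_sum_Icc_add_mul_pow (x : R) {r : ℕ} (hr : 0 < r) (hrp : r ≤ p) :
    ∑ a ∈ Icc 1 (p - 1), ∑ b ∈ Icc 1 (p - 1), ((a : R) + b * x) ^ (r * (p - 1)) =
      1 + x ^ (r * (p - 1)) := by
  set n := r * (p - 1)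
  have hn : 0 < n := Nat.mul_pos hr (by have := (Fact.out : p.Prime).two_le; omega)
  rw [sum_sum_add_mul_pow, sum_eq_add_of_mem 0 n (by simp) (by simp) hn.ne]
  · have hqn : p - 1 ∣ n := dvd_mul_left _ _
    simp only [sum_Icc_natCast_pow p, Nat.sub_zero, Nat.sub_self, hqn, dvd_zero, if_true,
      Nat.choose_zero_right, Nat.choose_self, Nat.cast_one]
    ring
  · rintro j hj ⟨hj0, hjn⟩
    by_cases hqj : p - 1 ∣ j
    · obtain ⟨t, rfl⟩ := hqj
      have hlt : (p - 1) * t < (p - 1) * r := by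
        rw [mem_range] at hj; rw [mul_comm _ r]; omega
      have hchoose : (n.choose ((p - 1) * t) : R) = 0 := by
        rw [CharP.cast_eq_zero_iff R p, mul_comm _ t]
        have ht : 0 < t := Nat.pos_of_ne_zero (by rintro rfl; simp at hj0)
        exact Nat.Prime.dvd_choose_mul_sub_one Fact.out ht (Nat.lt_of_mul_lt_mul_left hlt) hrp
      rw [hchoose, mul_zero]
    · simp [sum_Icc_natCast_pow p, hqj]

end CharP

theorem Zsqrtd.isUnit_natCast_iff {d : ℤ} {n : ℕ} : IsUnit (n : ℤ√d) ↔ n = 1 := by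
  rw [isUnit_iff_dvd_one, ← Int.cast_natCast, ← Int.cast_one, Zsqrtd.intCast_dvd_intCast]
  exact_mod_cast Nat.dvd_one

theorem stmt6_general (p r : ℕ) (hp : p.Prime) (hr1 : 1 ≤ r) (hrp : r < p) :
    (p : GaussianInt) ∣ (Gg (r * (p - 1)) p - (1 + Ig ^ (r * (p - 1)))) := by
  have : Fact p.Prime := ⟨hp⟩
  have := CharP.quotient GaussianInt p (Zsqrtd.isUnit_natCast_iff.not.2 hp.ne_one)
  rw [← Ideal.Quotient.eq_zero_iff_dvd, map_sub, sub_eq_zero]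
  simpa [Gg, Fg] using CharP.sum_Icc_sum_Icc_add_mul_pow p (Ideal.Quotient.mk _ Ig) hr1 hrp.le

theorem stmt6 (p r : ℕ) (hp : p.Prime) (hodd : Odd p) (hr1 : 1 ≤ r) (hrp : r < p) :
    (p : GaussianInt) ∣ (Gg (r * (p - 1)) p - (1 + Ig ^ (r * (p - 1)))) :=
  stmt6_general p r hp hr1 hrp
end
end

section
/- Let p be an odd prime. Then G_{p-1}(p) = ∑_{a=1}^{p-1} ∑_{b=1}^{p-1} (a+bi)^{p-1} satisfies G_{p-1}(p) ≡ 0 (mod p) in ℤ[i] if p ≡ 3 (mod 4), and G_{p-1}(p) ≡ 2 (mod p) if p ≡ 1 (mod 4). -/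
open Finset

theorem Finset.sum_sum_add_pow {R ι κ : Type*} [CommSemiring R] (s : Finset ι) (t : Finset κ)
    (f : ι → R) (g : κ → R) (n : ℕ) :
    ∑ a ∈ s, ∑ b ∈ t, (f a + g b) ^ n =
      ∑ j ∈ range (n + 1), (∑ a ∈ s, f a ^ j) * (∑ b ∈ t, g b ^ (n - j)) * n.choose j := by
  calc ∑ a ∈ s, ∑ b ∈ t, (f a + g b) ^ n
      = ∑ a ∈ s, ∑ j ∈ range (n + 1), ∑ b ∈ t, f a ^ j * g b ^ (n - j) * n.choose j := by
        simp only [add_pow]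
        exact Finset.sum_congr rfl fun a _ => Finset.sum_comm
    _ = _ := by
        rw [Finset.sum_comm]
        simp_rw [Finset.sum_mul_sum, Finset.sum_mul]

theorem ZMod.sum_Icc_natCast_pow_s7 (p : ℕ) [Fact p.Prime] (r : ℕ) :
    ∑ t ∈ Icc 1 (p - 1), (t : ZMod p) ^ r = if p - 1 ∣ r then -1 else 0 := by
  have hp := (Fact.out : p.Prime).pos
  have h := FiniteField.sum_pow_units (ZMod p) r
  rw [ZMod.card] at h
  rw [← h]
  refine sum_bij' (fun t ht => Units.mk0 (t : ZMod p) ?_) (fun u _ => (u : ZMod p).val)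
    (fun _ _ => mem_univ _) (fun u _ => ?_) (fun t ht => ?_) (fun u _ => ?_) (fun t _ => rfl)
  · rw [mem_Icc] at ht
    rw [Ne, ZMod.natCast_eq_zero_iff]
    exact Nat.not_dvd_of_pos_of_lt ht.1 (by omega)
  · rw [mem_Icc]
    have := (u : ZMod p).val_lt
    have := (ZMod.val_ne_zero (u : ZMod p)).mpr u.ne_zero
    omega
  · rw [mem_Icc] at ht
    exact ZMod.val_natCast_of_lt (by omega)
  · exact Units.ext (ZMod.natCast_zmod_val _)

theorem CharP.sum_Icc_natCast_pow_s7 {R : Type*} [CommRing R] (p : ℕ) [Fact p.Prime] [CharP R p]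
    (r : ℕ) : ∑ t ∈ Icc 1 (p - 1), (t : R) ^ r = if p - 1 ∣ r then -1 else 0 := by
  simpa [apply_ite] using congrArg (ZMod.castHom dvd_rfl R) (ZMod.sum_Icc_natCast_pow_s7 p r)

theorem sum_Icc_sum_Icc_add_mul_pow_sub_one {R : Type*} [CommRing R] (p : ℕ) [Fact p.Prime]
    [CharP R p] (y : R) :
    ∑ a ∈ Icc 1 (p - 1), ∑ b ∈ Icc 1 (p - 1), ((a : R) + b * y) ^ (p - 1) = 1 + y ^ (p - 1) := by
  have hp := (Fact.out : p.Prime).one_lt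
  rw [Finset.sum_sum_add_pow]
  simp only [mul_pow, ← Finset.sum_mul, CharP.sum_Icc_natCast_pow_s7, Nat.sub_add_cancel hp.le]
  rw [Finset.sum_eq_add_of_mem 0 (p - 1) (by simp; omega) (by simp; omega) (by omega)]
  · simp [add_comm]
  · rintro j hj ⟨hj0, hjp⟩
    have : ¬ p - 1 ∣ j := Nat.not_dvd_of_pos_of_lt (by omega) (by simp at hj; omega)
    simp [this]

theorem GaussianInt.natCast_mem_nonunits {p : ℕ} (hp : p ≠ 1) :
    (p : GaussianInt) ∈ nonunits GaussianInt := by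
  intro h
  have : ((p : ℤ) : GaussianInt) ∣ ((1 : ℤ) : GaussianInt) := by
    simpa using isUnit_iff_dvd_one.mp h
  rw [Zsqrtd.intCast_dvd_intCast, Int.natCast_dvd_ofNat, Nat.dvd_one] at this
  exact hp this

theorem Ig_sq : Ig ^ 2 = -1 := by
  ext <;> simp [Ig, sq]

theorem Ig_pow_of_even {n : ℕ} (hn : Even n) : Ig ^ n = (-1) ^ (n / 2) := by
  obtain ⟨k, rfl⟩ := hn
  rw [← two_mul, pow_mul, Ig_sq, Nat.mul_div_cancel_left k two_pos]

theorem stmt7_general (p : ℕ) (hp : p.Prime) :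
    (p % 4 = 3 → (p : GaussianInt) ∣ Gg (p - 1) p) ∧
    (p % 4 = 1 → (p : GaussianInt) ∣ (Gg (p - 1) p - 2)) := by
  have : Fact p.Prime := ⟨hp⟩
  set I := Ideal.span {(p : GaussianInt)}
  have : CharP (GaussianInt ⧸ I) p :=
    CharP.quotient _ p (GaussianInt.natCast_mem_nonunits hp.ne_one)
  have key : Ideal.Quotient.mk I (Gg (p - 1) p) = 1 + Ideal.Quotient.mk I (Ig ^ (p - 1)) := by
    simpa [Gg, Fg] using sum_Icc_sum_Icc_add_mul_pow_sub_one p (Ideal.Quotient.mk I Ig)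
  refine ⟨fun hp3 => ?_, fun hp1 => ?_⟩
  · rw [← Ideal.Quotient.eq_zero_iff_dvd, key, Ig_pow_of_even (Nat.even_iff.mpr (by omega)),
      Odd.neg_one_pow (Nat.odd_iff.mpr (by omega)), map_neg, map_one, add_neg_cancel]
  · rw [← Ideal.Quotient.eq_zero_iff_dvd, map_sub, key,
      Ig_pow_of_even (Nat.even_iff.mpr (by omega)), Even.neg_one_pow (Nat.even_iff.mpr (by omega)),
      map_one, one_add_one_eq_two, map_ofNat, sub_self]

theorem stmt7 (p : ℕ) (hp : p.Prime) (hodd : Odd p) :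
    (p % 4 = 3 → (p : GaussianInt) ∣ Gg (p - 1) p) ∧
    (p % 4 = 1 → (p : GaussianInt) ∣ (Gg (p - 1) p - 2)) :=
  stmt7_general p hp
end

section
/- Let p be an odd prime and 1 ≤ n ≤ p−2. Then G_n(p) ≡ (p−1) · (∑_{a=1}^{p-1} a^n) · (1 + i^n) (mod p²) in ℤ[i]. -/
noncomputable section

lemma sum_range_pow_zmod (p r : ℕ) [NeZero p] :
    ∑ i ∈ Finset.range p, ((i : ZMod p)) ^ r = ∑ x : ZMod p, x ^ r := by
  refine Finset.sum_nbij' (i := fun i => ((i : ZMod p))) (j := fun x => x.val) ?_ ?_ ?_ ?_ ?_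
  · intro a _; exact Finset.mem_univ _
  · intro x _; exact Finset.mem_range.mpr (ZMod.val_lt x)
  · intro a ha; simp [ZMod.val_natCast_of_lt (Finset.mem_range.mp ha)]
  · intro x _; simp [ZMod.natCast_val, ZMod.cast_id]
  · intro a _; rfl

lemma sps_dvd (p r : ℕ) (hp : p.Prime) (hr1 : 1 ≤ r) (hr2 : r ≤ p - 2) :
    (p : ℤ) ∣ Sps r (p - 1) := by
  haveI : Fact p.Prime := ⟨hp⟩
  rw [← ZMod.intCast_zmod_eq_zero_iff_dvd]
  have h0 : ((Sps r (p-1) : ℤ) : ZMod p) = ∑ t ∈ Finset.Icc 1 (p-1), ((t : ZMod p))^r := by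
    simp [Sps]
  rw [h0]
  have h1 : ∑ t ∈ Finset.Icc 1 (p-1), ((t : ZMod p))^r = ∑ t ∈ Finset.range p, ((t : ZMod p))^r := by
    have hins : Finset.range p = insert 0 (Finset.Icc 1 (p-1)) := by
      ext x; simp [Finset.mem_range, Finset.mem_insert]; omega
    rw [hins, Finset.sum_insert (by simp)]
    simp [zero_pow (by omega : r ≠ 0)]
  rw [h1, sum_range_pow_zmod]
  apply FiniteField.sum_pow_lt_card_sub_one
  rw [ZMod.card]
  omega

lemma sps_cast (r N : ℕ) : ((Sps r N : ℤ) : GaussianInt) = ∑ t ∈ Finset.Icc 1 N, (t : GaussianInt)^r := by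
  simp [Sps]

lemma gg_expand (n N : ℕ) :
    Gg n N = ∑ j ∈ Finset.range (n+1),
      (Sps j (N-1) : GaussianInt) * (Sps (n-j) (N-1) : GaussianInt) * Ig^(n-j) * (n.choose j) := by
  rw [Gg, Fg]
  simp_rw [add_pow, mul_pow]
  simp_rw [Finset.sum_comm (s := Finset.Icc 1 (N-1)) (t := Finset.range (n+1))]
  refine Finset.sum_congr rfl fun j _ => ?_
  rw [sps_cast, sps_cast, Finset.sum_mul, Finset.sum_mul, Finset.sum_mul]
  refine Finset.sum_congr rfl fun a _ => ?_
  simp only [Finset.mul_sum, Finset.sum_mul]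
  refine Finset.sum_congr rfl fun b _ => ?_
  ring

theorem stmt8 (p n : ℕ) (hp : p.Prime) (hodd : Odd p) (hn1 : 1 ≤ n) (hn2 : n ≤ p - 2) :
    (p : GaussianInt) ^ 2 ∣
      (Gg n p - (p - 1 : GaussianInt) * (Sps n (p - 1) : GaussianInt) * (1 + Ig ^ n)) := by
  have hp3 : 3 ≤ p := by
    have h2 := hp.two_le
    have hne : p ≠ 2 := by rintro rfl; exact (by decide : ¬ Odd 2) hodd
    omega
  have hSps0 : (Sps 0 (p-1) : ℤ) = (p : ℤ) - 1 := by
    simp [Sps]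
    omega
  obtain ⟨m, rfl⟩ : ∃ m, n = m + 1 := ⟨n - 1, by omega⟩
  rw [gg_expand, Finset.sum_range_succ, Finset.sum_range_succ']
  have hT0 : (Sps 0 (p-1) : GaussianInt) * (Sps (m+1-0) (p-1) : GaussianInt) * Ig^(m+1-0) * (((m+1).choose 0 : ℕ) : GaussianInt) =
      ((p : GaussianInt) - 1) * (Sps (m+1) (p-1) : GaussianInt) * Ig^(m+1) := by
    rw [Nat.choose_zero_right, hSps0]; push_cast; ring
  have hTn : (Sps (m+1) (p-1) : GaussianInt) * (Sps (m+1-(m+1)) (p-1) : GaussianInt) * Ig^(m+1-(m+1)) * (((m+1).choose (m+1) : ℕ) : GaussianInt) =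
      ((p : GaussianInt) - 1) * (Sps (m+1) (p-1) : GaussianInt) := by
    rw [Nat.choose_self, Nat.sub_self, hSps0]; push_cast; ring
  rw [hT0, hTn]
  have hrest : ∀ j ∈ Finset.range m, (p : GaussianInt)^2 ∣
      (Sps (j+1) (p-1) : GaussianInt) * (Sps (m+1-(j+1)) (p-1) : GaussianInt) * Ig^(m+1-(j+1)) * (((m+1).choose (j+1) : ℕ) : GaussianInt) := by
    intro j hj
    have hjm := Finset.mem_range.mp hj
    obtain ⟨u, hu⟩ := sps_dvd p (j+1) hp (by omega) (by omega)
    obtain ⟨v, hv⟩ := sps_dvd p (m+1-(j+1)) hp (by omega) (by omega)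
    refine ⟨(u : GaussianInt) * v * Ig^(m+1-(j+1)) * (((m+1).choose (j+1) : ℕ) : GaussianInt), ?_⟩
    rw [hu, hv]; push_cast; ring
  obtain ⟨w, hw⟩ := Finset.dvd_sum hrest
  rw [hw]
  exact ⟨w, by ring⟩
end
end

section
/- Let p be an odd prime and n even with 2 ≤ n ≤ p−3. Then S_n(p−1) = ∑_{a=1}^{p-1} a^n ≡ p·B_n (mod p²) in ℤ_(p), where B_n is the n-th Bernoulli number (which is p-integral since (p−1) ∤ n). -/
noncomputable section

/-!
Faulhaber's formula gives `∑_{a<p} a^n = ∑_{i ≤ n} C(n+1, i) B_i p^(n+1-i) / (n+1)`, whose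
`i = n` term is `p B_n`. For `i < n` we have `i < p - 1`, so `B_i` is `p`-integral by
von Staudt–Clausen, and `n + 1 < p` is a `p`-adic unit; hence the `i`-th term is divisible by
`p^(n+1-i)`, and `n + 1 - i ≥ 2`.
-/

open Finset

section

variable {p : ℕ} [Fact p.Prime]

lemma Padic.norm_natCast_inv_eq_one {j : ℕ} (hj : j ≠ 0) (hjp : j < p) :
    ‖((j : ℚ_[p]))⁻¹‖ = 1 := by
  rw [norm_inv, Padic.norm_natCast_eq_one_iff.2 (Nat.coprime_of_lt_prime hj hjp Fact.out), inv_one]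

lemma norm_bernoulli_two_mul_le_one {k : ℕ} (hk : 2 * k + 1 < p) :
    ‖((bernoulli (2 * k) : ℚ) : ℚ_[p])‖ ≤ 1 := by
  obtain ⟨m, hm⟩ := Bernoulli.vonStaudt_clausen k
  rw [eq_sub_of_add_eq hm.symm, sub_eq_add_neg]
  push_cast
  refine (IsUltrametricDist.norm_add_le_max _ _).trans (max_le (Padic.norm_int_le_one m) ?_)
  rw [norm_neg]
  refine IsUltrametricDist.norm_sum_le_of_forall_le_of_nonneg zero_le_one fun q hqmem => ?_
  obtain ⟨hq2k, hq, hdvd⟩ : q < 2 * k + 2 ∧ q.Prime ∧ q - 1 ∣ 2 * k := by simpa using hqmem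
  have hqp : q ≠ p := by
    rintro rfl
    rcases Nat.eq_zero_or_pos k with rfl | hk0
    · have := hq.two_le; omega
    · have := Nat.le_of_dvd (by omega) hdvd; omega
  rw [one_div, norm_inv,
    Padic.norm_natCast_eq_one_iff.2 ((Nat.coprime_primes Fact.out hq).2 hqp.symm), inv_one]

lemma norm_bernoulli_le_one {i : ℕ} (hi : i + 1 < p) :
    ‖((bernoulli i : ℚ) : ℚ_[p])‖ ≤ 1 := by
  obtain ⟨k, rfl | rfl⟩ := Nat.even_or_odd' i
  · exact norm_bernoulli_two_mul_le_one hi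
  rcases Nat.eq_zero_or_pos k with rfl | hk
  · rw [bernoulli_one, neg_div, Rat.cast_neg, norm_neg, one_div, Rat.cast_inv, Rat.cast_ofNat,
      ← Nat.cast_ofNat, Padic.norm_natCast_inv_eq_one two_ne_zero (by omega)]
  · rw [bernoulli_eq_zero_of_odd (odd_two_mul_add_one k) (by omega)]
    simp

lemma norm_faulhaber_term_le {n i : ℕ} (hn : n + 1 < p) (hi : i < n) :
    ‖((bernoulli i * (n + 1).choose i * (p : ℚ) ^ (n + 1 - i) / (n + 1) : ℚ) : ℚ_[p])‖
      ≤ (p : ℝ) ^ (-(2 : ℤ)) := by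
  push_cast
  rw [div_eq_mul_inv, norm_mul, norm_mul, norm_mul, Padic.norm_p_pow,
    ← Nat.cast_succ, Padic.norm_natCast_inv_eq_one n.succ_ne_zero hn, mul_one]
  calc _ ≤ 1 * 1 * (p : ℝ) ^ (-((n + 1 - i : ℕ) : ℤ)) := by
          gcongr
          · exact norm_bernoulli_le_one (by omega)
          · exact IsUltrametricDist.norm_natCast_le_one _ _
    _ ≤ (p : ℝ) ^ (-(2 : ℤ)) := by
          rw [one_mul, one_mul]
          exact zpow_le_zpow_right₀ (mod_cast (Fact.out : p.Prime).one_le) (by omega)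

lemma norm_sum_range_pow_sub_mul_bernoulli_le {n : ℕ} (hn : n + 1 < p) :
    ‖((∑ k ∈ range p, (k : ℚ) ^ n - p * bernoulli n : ℚ) : ℚ_[p])‖ ≤ (p : ℝ) ^ (-(2 : ℤ)) := by
  have hlast :
      bernoulli n * (n + 1).choose n * (p : ℚ) ^ (n + 1 - n) / (n + 1) = p * bernoulli n := by
    rw [Nat.choose_succ_self_right, Nat.add_sub_cancel_left, pow_one]
    field_simp
    push_cast
    ring
  rw [sum_range_pow, sum_range_succ, hlast, add_sub_cancel_right, Rat.cast_sum]
  exact IsUltrametricDist.norm_sum_le_of_forall_le_of_nonneg (by positivity)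
    fun i hi => norm_faulhaber_term_le hn (mem_range.1 hi)

end

lemma Sps_eq_sum_range {n : ℕ} (hn : n ≠ 0) (N : ℕ) :
    Sps n N = ∑ k ∈ range (N + 1), (k : ℤ) ^ n := by
  rw [Nat.range_succ_eq_Icc_zero, ← insert_Icc_add_one_left_eq_Icc N.zero_le, sum_insert (by simp),
    Nat.cast_zero, zero_pow hn, zero_add, zero_add, Sps]

theorem stmt9_general (p n : ℕ) [Fact p.Prime]
    (hn2 : 2 ≤ n) (hn3 : n ≤ p - 3) :
    ‖((Sps n (p - 1) : ℚ_[p]) - (p : ℚ_[p]) * ((bernoulli n : ℚ) : ℚ_[p]))‖ ≤ (p : ℝ) ^ (-(2 : ℤ)) := by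
  have hSps := Sps_eq_sum_range (by omega : n ≠ 0) (p - 1)
  rw [Nat.sub_add_cancel (by omega)] at hSps
  convert norm_sum_range_pow_sub_mul_bernoulli_le (p := p) (n := n) (by omega) using 2
  rw [hSps]
  push_cast
  rfl

theorem stmt9 (p n : ℕ) [Fact p.Prime] (hodd : Odd p) (hn : Even n)
    (hn2 : 2 ≤ n) (hn3 : n ≤ p - 3) :
    ‖((Sps n (p - 1) : ℚ_[p]) - (p : ℚ_[p]) * ((bernoulli n : ℚ) : ℚ_[p]))‖ ≤ (p : ℝ) ^ (-(2 : ℤ)) :=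
  stmt9_general p n hn2 hn3
end
end

section
/- Let p ≥ 7 be prime and let r be even with 6 ≤ r ≤ p. Then in ℤ_(p): S_r(p−1) ≡ p·B_r + (p³/6)·r(r−1)·B_{r−2} + (p⁵/120)·r(r−1)(r−2)(r−3)·B_{r−4} (mod p⁶). -/
noncomputable section

/-! Faulhaber's formula writes `S_r(p - 1) = ∑_{k<p} k^r` as
`∑_{i ≤ r} B_i (r choose i) p^(r+1-i) / (r+1-i)`. The terms `i = r, r - 2, r - 4` are the three
displayed ones, and `i = r - 1, r - 3` vanish because odd Bernoulli numbers beyond `B_1` are zero.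
Every remaining term has `p`-adic norm at most `p⁻⁶`: Faulhaber's formula for `∑_{k<p} k^n`,
read as an expression for `p B_n`, shows by strong induction that `‖B_n‖ ≤ p` while `n + 1 < p`,
and `p^(r+1-i)` supplies at least `p⁷` when `i ≥ 2` is even; the terms `i = 0, 1` are
`p^(r+1)/(r+1)` and `-p^r/2`, where `r + 1 ≤ p` and `r < p` (as `p` is odd). -/

open Finset


def faulhaberTerm (r n i : ℕ) : ℚ :=
  bernoulli i * r.choose i * (n : ℚ) ^ (r + 1 - i) / (r + 1 - i : ℕ)

theorem sum_range_pow_eq_sum_faulhaberTerm (n r : ℕ) :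
    ∑ k ∈ range n, (k : ℚ) ^ r = ∑ i ∈ range (r + 1), faulhaberTerm r n i := by
  rw [sum_range_pow]
  refine sum_congr rfl fun i hi => ?_
  have hi : i ≤ r := Nat.lt_succ_iff.mp (mem_range.mp hi)
  have hchoose : (r.choose i : ℚ) * (r + 1) = (r + 1).choose i * (r + 1 - i : ℕ) := by
    exact_mod_cast Nat.choose_mul_succ_eq r i
  have : ((r + 1 - i : ℕ) : ℚ) ≠ 0 := Nat.cast_ne_zero.mpr (by omega)
  rw [faulhaberTerm, div_eq_div_iff (by positivity) this]
  linear_combination bernoulli i * (n : ℚ) ^ (r + 1 - i) * hchoose.symm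

theorem faulhaberTerm_self (r n : ℕ) : faulhaberTerm r n r = n * bernoulli r := by
  simp [faulhaberTerm, mul_comm]

theorem faulhaberTerm_sub_two (n : ℕ) {r : ℕ} (hr : 2 ≤ r) :
    faulhaberTerm r n (r - 2) = (n : ℚ) ^ 3 / 6 * r * (r - 1) * bernoulli (r - 2) := by
  obtain ⟨m, rfl⟩ := Nat.exists_eq_add_of_le' hr
  rw [faulhaberTerm, Nat.add_sub_cancel, Nat.choose_symm_add, Nat.cast_choose_two,
    show m + 2 + 1 - m = 3 by omega]
  push_cast
  ring

theorem faulhaberTerm_sub_four (n : ℕ) {r : ℕ} (hr : 4 ≤ r) :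
    faulhaberTerm r n (r - 4) =
      (n : ℚ) ^ 5 / 120 * r * (r - 1) * (r - 2) * (r - 3) * bernoulli (r - 4) := by
  obtain ⟨m, rfl⟩ := Nat.exists_eq_add_of_le' hr
  rw [faulhaberTerm, Nat.add_sub_cancel, Nat.choose_symm_add, show m + 4 + 1 - m = 5 by omega,
    Nat.cast_choose ℚ (by omega : 4 ≤ m + 4), Nat.add_sub_cancel]
  simp only [Nat.factorial_succ, Nat.factorial_zero]
  field_simp
  push_cast
  ring

theorem faulhaberTerm_eq_zero_of_odd (r n : ℕ) {i : ℕ} (hi : Odd i) (hi1 : 1 < i) :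
    faulhaberTerm r n i = 0 := by
  simp [faulhaberTerm, bernoulli_eq_zero_of_odd hi hi1]

theorem Sps_pred_eq_sum_range {r : ℕ} (hr : r ≠ 0) (N : ℕ) :
    (Sps r (N - 1) : ℚ) = ∑ k ∈ range N, (k : ℚ) ^ r := by
  rcases N with _ | n
  · simp [Sps]
  rw [sum_range_eq_add_Ico _ n.succ_pos, Nat.cast_zero, zero_pow hr, zero_add, Sps,
    Nat.add_sub_cancel, Nat.succ_eq_add_one, Ico_add_one_right_eq_Icc]
  norm_cast

theorem Sps_pred_sub_eq_sum_faulhaberTerm {r : ℕ} (hr : Even r) (hr4 : 4 < r) (N : ℕ) :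
    (Sps r (N - 1) : ℚ) - (N * bernoulli r + (N : ℚ) ^ 3 / 6 * r * (r - 1) * bernoulli (r - 2) +
      (N : ℚ) ^ 5 / 120 * r * (r - 1) * (r - 2) * (r - 3) * bernoulli (r - 4)) =
      ∑ i ∈ range (r - 4), faulhaberTerm r N i := by
  rw [Sps_pred_eq_sum_range (by omega), sum_range_pow_eq_sum_faulhaberTerm,
    show r + 1 = r - 4 + 1 + 1 + 1 + 1 + 1 by omega]
  simp only [sum_range_succ]
  rw [show r - 4 + 1 + 1 + 1 + 1 = r by omega, show r - 4 + 1 + 1 + 1 = r - 1 by omega,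
    show r - 4 + 1 + 1 = r - 2 by omega, show r - 4 + 1 = r - 3 by omega,
    faulhaberTerm_self, faulhaberTerm_sub_two N (by omega), faulhaberTerm_sub_four N (by omega),
    faulhaberTerm_eq_zero_of_odd r N (Nat.Even.sub_odd (by omega) hr odd_one) (by omega),
    faulhaberTerm_eq_zero_of_odd r N (Nat.Even.sub_odd (by omega) hr (by decide)) (by omega)]
  ring

namespace Padic

variable {p : ℕ} [hp : Fact p.Prime]

theorem norm_natCast_eq_one_of_pos_of_lt {m : ℕ} (h0 : 0 < m) (hm : m < p) :
    ‖(m : ℚ_[p])‖ = 1 :=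
  norm_natCast_eq_one_iff.mpr <| (Nat.Prime.coprime_iff_not_dvd hp.out).mpr <|
    Nat.not_dvd_of_pos_of_lt h0 hm

theorem inv_le_norm_natCast {m : ℕ} (h0 : 0 < m) (hm : m ≤ p) : (p : ℝ)⁻¹ ≤ ‖(m : ℚ_[p])‖ := by
  rcases hm.lt_or_eq with hm | rfl
  · rw [norm_natCast_eq_one_of_pos_of_lt h0 hm]
    exact inv_le_one_of_one_le₀ (mod_cast hp.out.one_le)
  · rw [norm_p]

theorem norm_faulhaberTerm_le (r i : ℕ) :
    ‖(faulhaberTerm r p i : ℚ_[p])‖ ≤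
      ‖(bernoulli i : ℚ_[p])‖ * (p : ℝ) ^ (-(r + 1 - i : ℕ) : ℤ) / ‖((r + 1 - i : ℕ) : ℚ_[p])‖ := by
  push_cast [faulhaberTerm]
  rw [norm_div, norm_mul, norm_mul, norm_p_pow]
  gcongr
  exact mul_le_of_le_one_right (norm_nonneg _) (IsUltrametricDist.norm_natCast_le_one _ _)

theorem norm_bernoulli_le {n : ℕ} (hn : n + 1 < p) : ‖(bernoulli n : ℚ_[p])‖ ≤ p := by
  induction n using Nat.strong_induction_on with
  | _ n ih =>
  have hp0 : (0 : ℝ) < p := mod_cast hp.out.pos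
  have hsum : (p : ℚ) * bernoulli n =
      ∑ k ∈ range p, (k : ℚ) ^ n - ∑ i ∈ range n, faulhaberTerm n p i := by
    rw [sum_range_pow_eq_sum_faulhaberTerm, sum_range_succ, faulhaberTerm_self]
    ring
  have hpowers : ‖∑ k ∈ range p, (k : ℚ_[p]) ^ n‖ ≤ 1 :=
    IsUltrametricDist.norm_sum_le_of_forall_le_of_nonneg zero_le_one fun k _ => by
      rw [norm_pow]
      exact pow_le_one₀ (norm_nonneg _) (IsUltrametricDist.norm_natCast_le_one _ _)
  have hterms : ‖∑ i ∈ range n, (faulhaberTerm n p i : ℚ_[p])‖ ≤ 1 :=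
    IsUltrametricDist.norm_sum_le_of_forall_le_of_nonneg zero_le_one fun i hi => by
      have hi := mem_range.mp hi
      refine (norm_faulhaberTerm_le n i).trans ?_
      rw [norm_natCast_eq_one_of_pos_of_lt (m := n + 1 - i) (by omega) (by omega), div_one]
      calc ‖(bernoulli i : ℚ_[p])‖ * (p : ℝ) ^ (-(n + 1 - i : ℕ) : ℤ)
          ≤ p * (p : ℝ) ^ (-1 : ℤ) := by
            gcongr
            · exact ih i hi (by omega)
            · exact_mod_cast hp.out.one_le
            · omega
        _ = 1 := by rw [zpow_neg_one, mul_inv_cancel₀ hp0.ne']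
  have hpB : ‖(p : ℚ_[p]) * bernoulli n‖ ≤ 1 := by
    have := congrArg (fun x : ℚ => (x : ℚ_[p])) hsum
    push_cast at this
    rw [this, sub_eq_add_neg]
    exact (nonarchimedean _ _).trans (max_le hpowers (by rwa [norm_neg]))
  rwa [norm_mul, norm_p, inv_mul_le_iff₀ hp0, mul_one] at hpB

theorem norm_faulhaberTerm_le_of_add_five_le {r i : ℕ} (hr : Even r) (hrp : r < p)
    (hi : i + 5 ≤ r) : ‖(faulhaberTerm r p i : ℚ_[p])‖ ≤ (p : ℝ) ^ (-6 : ℤ) := by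
  have hp0 : (0 : ℝ) < p := mod_cast hp.out.pos
  have hp1 : (1 : ℝ) ≤ p := mod_cast hp.out.one_le
  have hr6 : 6 ≤ r := by
    obtain ⟨b, rfl⟩ := hr
    omega
  rcases Nat.even_or_odd i with hie | hio
  · rcases Nat.eq_zero_or_pos i with rfl | hi0
    · refine (norm_faulhaberTerm_le r 0).trans ?_
      rw [bernoulli_zero, Rat.cast_one, norm_one, one_mul, Nat.sub_zero]
      calc (p : ℝ) ^ (-(r + 1 : ℕ) : ℤ) / ‖((r + 1 : ℕ) : ℚ_[p])‖
          ≤ (p : ℝ) ^ (-(r + 1 : ℕ) : ℤ) / (p : ℝ)⁻¹ := by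
            gcongr
            exact inv_le_norm_natCast r.succ_pos hrp
        _ = (p : ℝ) ^ (-(r : ℤ)) := by
            rw [div_inv_eq_mul, ← zpow_add_one₀ hp0.ne']
            push_cast
            ring_nf
        _ ≤ (p : ℝ) ^ (-6 : ℤ) := zpow_le_zpow_right₀ hp1 (by omega)
    · have hi6 : i + 6 ≤ r := by
        obtain ⟨a, rfl⟩ := hie
        obtain ⟨b, rfl⟩ := hr
        omega
      refine (norm_faulhaberTerm_le r i).trans ?_
      rw [norm_natCast_eq_one_of_pos_of_lt (m := r + 1 - i) (by omega) (by omega), div_one]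
      calc ‖(bernoulli i : ℚ_[p])‖ * (p : ℝ) ^ (-(r + 1 - i : ℕ) : ℤ)
          ≤ p * (p : ℝ) ^ (-7 : ℤ) := by
            gcongr
            · exact norm_bernoulli_le (by omega)
            · omega
        _ = (p : ℝ) ^ (-6 : ℤ) := by rw [← zpow_one_add₀ hp0.ne']; norm_num
  · obtain rfl | hi1 := (show 1 ≤ i from hio.pos).eq_or_lt
    · refine (norm_faulhaberTerm_le r 1).trans ?_
      have h2 : ‖((2 : ℕ) : ℚ_[p])‖ = 1 := norm_natCast_eq_one_of_pos_of_lt two_pos (by omega)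
      rw [norm_natCast_eq_one_of_pos_of_lt (m := r + 1 - 1) (by omega) (by omega), div_one,
        bernoulli_one]
      push_cast at h2 ⊢
      rw [norm_div, norm_neg, norm_one, h2, div_one, one_mul]
      exact zpow_le_zpow_right₀ hp1 (by omega)
    · rw [faulhaberTerm_eq_zero_of_odd r p hio hi1, Rat.cast_zero, norm_zero]
      positivity

end Padic

theorem stmt12_general (p r : ℕ) [Fact p.Prime] (hr : Even r)
    (hr6 : 6 ≤ r) (hrp : r ≤ p) :
    ‖((Sps r (p - 1) : ℚ_[p]) -
      ((p : ℚ_[p]) * ((bernoulli r : ℚ) : ℚ_[p]) +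
        (p : ℚ_[p]) ^ 3 / 6 * (r : ℚ_[p]) * ((r : ℚ_[p]) - 1) * ((bernoulli (r - 2) : ℚ) : ℚ_[p]) +
        (p : ℚ_[p]) ^ 5 / 120 * (r : ℚ_[p]) * ((r : ℚ_[p]) - 1) * ((r : ℚ_[p]) - 2) *
          ((r : ℚ_[p]) - 3) * ((bernoulli (r - 4) : ℚ) : ℚ_[p])))‖ ≤ (p : ℝ) ^ (-(6 : ℤ)) := by
  have hr_lt : r < p := hrp.lt_of_ne <| by
    rintro rfl
    have := (Nat.Prime.even_iff Fact.out).mp hr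
    omega
  have htail := congrArg (fun x : ℚ => (x : ℚ_[p]))
    (Sps_pred_sub_eq_sum_faulhaberTerm hr (by omega) p)
  push_cast at htail
  rw [htail]
  exact IsUltrametricDist.norm_sum_le_of_forall_le_of_nonneg (by positivity) fun i hi =>
    Padic.norm_faulhaberTerm_le_of_add_five_le hr hr_lt (by simp at hi; omega)

theorem stmt12 (p r : ℕ) [Fact p.Prime] (hp7 : 7 ≤ p) (hr : Even r)
    (hr6 : 6 ≤ r) (hrp : r ≤ p) :
    ‖((Sps r (p - 1) : ℚ_[p]) -
      ((p : ℚ_[p]) * ((bernoulli r : ℚ) : ℚ_[p]) +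
        (p : ℚ_[p]) ^ 3 / 6 * (r : ℚ_[p]) * ((r : ℚ_[p]) - 1) * ((bernoulli (r - 2) : ℚ) : ℚ_[p]) +
        (p : ℚ_[p]) ^ 5 / 120 * (r : ℚ_[p]) * ((r : ℚ_[p]) - 1) * ((r : ℚ_[p]) - 2) *
          ((r : ℚ_[p]) - 3) * ((bernoulli (r - 4) : ℚ) : ℚ_[p])))‖ ≤ (p : ℝ) ^ (-(6 : ℤ)) :=
  stmt12_general p r hr hr6 hrp
end
end

section
/- Let p ≥ 7 be prime and let r be odd with 7 ≤ r ≤ p. Then in ℤ_(p): S_r(p−1) ≡ (p²/2)·r·B_{r−1} + (p⁴/24)·r(r−1)(r−2)·B_{r−3} (mod p⁶). -/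
noncomputable section

lemma norm_nat_le_one' (p : ℕ) [Fact p.Prime] (n : ℕ) : ‖(n : ℚ_[p])‖ ≤ 1 := by
  have := Padic.norm_int_le_one (p := p) (n : ℤ)
  simpa using this

lemma norm_nat_eq_one' (p : ℕ) [Fact p.Prime] {n : ℕ} (h : ¬ (p ∣ n)) :
    ‖(n : ℚ_[p])‖ = 1 := by
  refine le_antisymm (norm_nat_le_one' p n) ?_
  by_contra hlt
  push_neg at hlt
  have : ‖((n : ℤ) : ℚ_[p])‖ < 1 := by simpa using hlt
  rw [Padic.norm_intCast_lt_one_iff] at this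
  exact h (by exact_mod_cast this)

lemma psum_dvd (p : ℕ) [hp : Fact p.Prime] {i : ℕ} (hi : i < p - 1) :
    (p : ℤ) ∣ ∑ k ∈ Finset.range p, (k : ℤ) ^ i := by
  have hz : ((∑ k ∈ Finset.range p, (k : ℤ) ^ i : ℤ) : ZMod p) = 0 := by
    push_cast
    have h1 : ∑ k ∈ Finset.range p, (k : ZMod p) ^ i = ∑ x : ZMod p, x ^ i := by
      haveI : NeZero p := ⟨hp.out.ne_zero⟩
      refine Finset.sum_nbij' (fun k => (k : ZMod p)) (fun x => x.val) ?_ ?_ ?_ ?_ ?_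
      · intro a _; exact Finset.mem_univ _
      · intro a _; exact Finset.mem_range.mpr (ZMod.val_lt a)
      · intro a ha; exact ZMod.val_natCast_of_lt (Finset.mem_range.mp ha)
      · intro a _; exact ZMod.natCast_rightInverse a
      · intro a _; rfl
    rw [h1]
    exact FiniteField.sum_pow_lt_card_sub_one (ZMod p) i (by rwa [ZMod.card])
  exact_mod_cast (ZMod.intCast_zmod_eq_zero_iff_dvd _ _).mp hz

lemma bern_norm_le (p : ℕ) [hp : Fact p.Prime] (i : ℕ) (hi : i < p - 1) :
    ‖((bernoulli i : ℚ) : ℚ_[p])‖ ≤ 1 := by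
  induction i using Nat.strong_induction_on with
  | _ i ih =>
    rcases Nat.eq_zero_or_pos i with rfl | hi1
    · simp
    have hp2 : 2 ≤ p := hp.out.two_le
    have hp0 : (0:ℝ) < p := by positivity
    have hp1 : (1:ℝ) < p := by exact_mod_cast hp.out.one_lt
    have hF := sum_range_pow p i
    rw [Finset.sum_range_succ] at hF
    have hc : ((i+1).choose i) = i + 1 := Nat.choose_succ_self_right i
    have hne : ((i:ℚ) + 1) ≠ 0 := by positivity
    have hkey : (bernoulli i : ℚ) * p =
        (∑ k ∈ Finset.range p, (k : ℚ) ^ i) -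
          ∑ j ∈ Finset.range i, bernoulli j * ((i+1).choose j) * (p:ℚ)^(i+1-j) / (i+1) := by
      rw [hF, hc]
      have : i + 1 - i = 1 := by omega
      rw [this]
      push_cast
      field_simp
      ring
    have hkey2 : ((bernoulli i : ℚ) : ℚ_[p]) * (p : ℚ_[p]) =
        ((((∑ k ∈ Finset.range p, (k : ℤ) ^ i : ℤ)) : ℚ_[p])) -
          ∑ j ∈ Finset.range i,
            ((bernoulli j : ℚ) : ℚ_[p]) * ((i+1).choose j : ℚ_[p]) * (p:ℚ_[p])^(i+1-j) /
              ((i : ℚ_[p])+1) := by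
      have := congrArg (fun q : ℚ => (q : ℚ_[p])) hkey
      push_cast at this ⊢
      convert this using 2
    have hS : ‖(((∑ k ∈ Finset.range p, (k : ℤ) ^ i : ℤ)) : ℚ_[p])‖ ≤ (p:ℝ)^(-1 : ℤ) := by
      rw [show ((-1:ℤ) = (-(1:ℕ) : ℤ)) by norm_num, Padic.norm_int_le_pow_iff_dvd]
      simpa using psum_dvd p hi
    have hrest : ‖∑ j ∈ Finset.range i,
            ((bernoulli j : ℚ) : ℚ_[p]) * ((i+1).choose j : ℚ_[p]) * (p:ℚ_[p])^(i+1-j) /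
              ((i : ℚ_[p])+1)‖ ≤ (p:ℝ)^(-1 : ℤ) := by
      apply IsUltrametricDist.norm_sum_le_of_forall_le_of_nonneg (by positivity)
      intro j hj
      have hj' : j < i := Finset.mem_range.mp hj
      have hden : ‖((i : ℚ_[p])+1)‖ = 1 := by
        have : ¬ (p ∣ (i+1)) := by
          intro hd
          have := Nat.le_of_dvd (by omega) hd
          omega
        have := norm_nat_eq_one' p this
        rwa [Nat.cast_add, Nat.cast_one] at this
      rw [norm_div, norm_mul, norm_mul, hden, div_one, Padic.norm_p_pow]
      calc ‖((bernoulli j : ℚ) : ℚ_[p])‖ * ‖((i+1).choose j : ℚ_[p])‖ * (p:ℝ)^(-(i+1-j:ℕ) : ℤ)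
          ≤ 1 * 1 * (p:ℝ)^(-(i+1-j:ℕ) : ℤ) := by
            apply mul_le_mul_of_nonneg_right _ (by positivity)
            exact mul_le_mul (ih j hj' (by omega)) (norm_nat_le_one' p _) (norm_nonneg _)
              zero_le_one
        _ = (p:ℝ)^(-(i+1-j:ℕ) : ℤ) := by ring
        _ ≤ (p:ℝ)^(-1 : ℤ) := by
            apply zpow_le_zpow_right₀ (le_of_lt hp1)
            omega
    have hmain : ‖((bernoulli i : ℚ) : ℚ_[p]) * (p : ℚ_[p])‖ ≤ (p:ℝ)^(-1 : ℤ) := by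
      rw [hkey2, sub_eq_add_neg]
      refine le_trans (Padic.nonarchimedean _ _) ?_
      rw [norm_neg]
      exact max_le hS hrest
    rw [norm_mul, Padic.norm_p] at hmain
    have : (p:ℝ)^(-1:ℤ) = (p:ℝ)⁻¹ := by simp
    rw [this] at hmain
    calc ‖((bernoulli i : ℚ) : ℚ_[p])‖
        = ‖((bernoulli i : ℚ) : ℚ_[p])‖ * (p:ℝ)⁻¹ * p := by
          field_simp
      _ ≤ (p:ℝ)⁻¹ * p := by
          apply mul_le_mul_of_nonneg_right hmain (le_of_lt hp0)
      _ = 1 := by field_simp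

lemma key_split (r n : ℕ) (hr7 : 7 ≤ r) (hn : 1 ≤ n) :
    (Sps r (n-1) : ℚ) =
      ((n:ℚ)^2/2 * r * bernoulli (r-1)
       + (n:ℚ)^4/24 * r * ((r:ℚ)-1) * ((r:ℚ)-2) * bernoulli (r-3))
      + ∑ i ∈ ((Finset.range (r+1)).erase (r-1)).erase (r-3),
          bernoulli i * ((r+1).choose i) * (n:ℚ)^(r+1-i) / (r+1) := by
  obtain ⟨m, rfl⟩ : ∃ m, r = m + 7 := ⟨r - 7, by omega⟩
  have h1 : (Sps (m+7) (n-1) : ℚ) = ∑ k ∈ Finset.range n, (k : ℚ) ^ (m+7) := by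
    have hIcc : Finset.Icc 1 (n-1) = Finset.Ico 1 n := by
      rw [← Finset.Ico_add_one_right_eq_Icc]
      congr 1
      omega
    rw [Sps, hIcc]
    push_cast
    rw [Finset.range_eq_Ico, Finset.sum_eq_sum_Ico_succ_bot (by omega : 0 < n)]
    simp
  rw [h1, sum_range_pow]
  set f : ℕ → ℚ := fun i =>
    bernoulli i * ((m+7+1).choose i) * (n:ℚ)^(m+7+1-i) / (((m+7:ℕ):ℚ)+1) with hf
  have e1 : (m + 7 - 1) = m + 6 := by omega
  have e3 : (m + 7 - 3) = m + 4 := by omega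
  rw [e1, e3]
  have hm6 : m + 6 ∈ Finset.range (m+7+1) := by simp only [Finset.mem_range]; omega
  have hm4 : m + 4 ∈ (Finset.range (m+7+1)).erase (m+6) := by
    simp only [Finset.mem_erase, Finset.mem_range]
    omega
  rw [← Finset.add_sum_erase _ f hm6, ← Finset.add_sum_erase _ f hm4]
  have hch2 : ((m+8).choose (m+6) : ℚ) = (m+8)*(m+7)/2 := by
    have : (m+8).choose (m+6) = (m+8).choose 2 := by
      rw [← Nat.choose_symm (by omega : 2 ≤ m + 8)]
      congr 1
    rw [this, Nat.cast_choose_two]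
    push_cast
    ring
  have hch4 : ((m+8).choose (m+4) : ℚ) = (m+8)*(m+7)*(m+6)*(m+5)/24 := by
    have h : (m+8).choose (m+4) = (m+8).choose 4 := by
      rw [← Nat.choose_symm (by omega : 4 ≤ m + 8)]
      congr 1
    rw [h, Nat.cast_choose ℚ (by omega : 4 ≤ m + 8)]
    have h8 : Nat.factorial (m+8) = (m+8)*((m+7)*((m+6)*((m+5)*Nat.factorial (m+4)))) := by
      have a5 : Nat.factorial (m+5) = (m+5) * Nat.factorial (m+4) := Nat.factorial_succ (m+4)
      have a6 : Nat.factorial (m+6) = (m+6) * Nat.factorial (m+5) := Nat.factorial_succ (m+5)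
      have a7 : Nat.factorial (m+7) = (m+7) * Nat.factorial (m+6) := Nat.factorial_succ (m+6)
      have a8 : Nat.factorial (m+8) = (m+8) * Nat.factorial (m+7) := Nat.factorial_succ (m+7)
      rw [a8, a7, a6, a5]
    have h84 : m + 8 - 4 = m + 4 := by omega
    rw [h84, h8]
    have hfac : ((Nat.factorial (m+4)) : ℚ) ≠ 0 := by exact_mod_cast (m+4).factorial_ne_zero
    push_cast
    rw [show ((Nat.factorial 4 : ℕ) : ℚ) = 24 by norm_num [Nat.factorial]]
    field_simp
  have hfm6 : f (m+6) = (n:ℚ)^2/2 * (m+7) * bernoulli (m+6) := by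
    rw [hf]
    simp only []
    have : m + 7 + 1 - (m+6) = 2 := by omega
    rw [this]
    rw [show ((m+7+1).choose (m+6)) = ((m+8).choose (m+6)) by norm_num]
    rw [hch2]
    push_cast
    have : (m:ℚ) + 8 ≠ 0 := by positivity
    field_simp
    ring
  have hfm4 : f (m+4) = (n:ℚ)^4/24 * (m+7) * ((m+7:ℚ)-1) * ((m+7:ℚ)-2) * bernoulli (m+4) := by
    rw [hf]
    simp only []
    have : m + 7 + 1 - (m+4) = 4 := by omega
    rw [this]
    rw [show ((m+7+1).choose (m+4)) = ((m+8).choose (m+4)) by norm_num]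
    rw [hch4]
    push_cast
    have : (m:ℚ) + 8 ≠ 0 := by positivity
    field_simp
    ring
  rw [hfm6, hfm4]
  push_cast
  ring

theorem stmt13 (p r : ℕ) [Fact p.Prime] (hp7 : 7 ≤ p) (hr : Odd r)
    (hr7 : 7 ≤ r) (hrp : r ≤ p) :
    ‖((Sps r (p - 1) : ℚ_[p]) -
      ((p : ℚ_[p]) ^ 2 / 2 * (r : ℚ_[p]) * ((bernoulli (r - 1) : ℚ) : ℚ_[p]) +
        (p : ℚ_[p]) ^ 4 / 24 * (r : ℚ_[p]) * ((r : ℚ_[p]) - 1) * ((r : ℚ_[p]) - 2) *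
          ((bernoulli (r - 3) : ℚ) : ℚ_[p])))‖ ≤ (p : ℝ) ^ (-(6 : ℤ)) := by
  have hp : p.Prime := Fact.out
  have hp0 : (0:ℝ) < p := by exact_mod_cast hp.pos
  have hp1 : (1:ℝ) < p := by exact_mod_cast hp.one_lt
  obtain ⟨u, hu⟩ := hp.odd_of_ne_two (by omega)
  obtain ⟨s, hs⟩ := hr
  have hkey := key_split r p hr7 (by omega)
  have heq : (Sps r (p - 1) : ℚ_[p]) -
      ((p : ℚ_[p]) ^ 2 / 2 * (r : ℚ_[p]) * ((bernoulli (r - 1) : ℚ) : ℚ_[p]) +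
        (p : ℚ_[p]) ^ 4 / 24 * (r : ℚ_[p]) * ((r : ℚ_[p]) - 1) * ((r : ℚ_[p]) - 2) *
          ((bernoulli (r - 3) : ℚ) : ℚ_[p])) =
      ∑ i ∈ ((Finset.range (r+1)).erase (r-1)).erase (r-3),
        ((bernoulli i : ℚ) : ℚ_[p]) * ((r+1).choose i : ℚ_[p]) * (p:ℚ_[p])^(r+1-i) /
          ((r:ℚ_[p])+1) := by
    have h := congrArg (fun q : ℚ => (q : ℚ_[p])) hkey
    push_cast at h
    rw [h]
    ring
  rw [heq]
  apply IsUltrametricDist.norm_sum_le_of_forall_le_of_nonneg (by positivity)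
  intro i hi
  simp only [Finset.mem_erase, Finset.mem_range] at hi
  obtain ⟨hi3, hi1, hir⟩ := hi
  by_cases hodd : Odd i ∧ 1 < i
  · have hb : bernoulli i = 0 := by
      rw [bernoulli_eq_bernoulli'_of_ne_one (by omega)]
      exact bernoulli'_eq_zero_of_odd hodd.1 hodd.2
    rw [hb]
    simp only [Rat.cast_zero, zero_mul, zero_div, norm_zero]
    positivity
  · have hile : i + 5 ≤ r := by
      rcases Nat.even_or_odd i with ⟨t, ht⟩ | ho
      · omega
      · have h1 : ¬ 1 < i := fun h => hodd ⟨ho, h⟩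
        rcases ho with ⟨t, ht⟩
        omega
    have hb1 : ‖((bernoulli i : ℚ) : ℚ_[p])‖ ≤ 1 := bern_norm_le p i (by omega)
    have hden : ‖((r:ℚ_[p])+1)‖ = 1 := by
      have hnd : ¬ (p ∣ (r+1)) := by
        rintro ⟨c, hc⟩
        by_cases h1 : c = 1
        · rw [h1] at hc; omega
        · have h2 : c ≠ 0 := by rintro rfl; omega
          have : p * 2 ≤ p * c := Nat.mul_le_mul_left p (by omega)
          omega
      have := norm_nat_eq_one' p hnd
      rwa [Nat.cast_add, Nat.cast_one] at this
    rw [norm_div, norm_mul, norm_mul, hden, div_one, Padic.norm_p_pow]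
    calc ‖((bernoulli i : ℚ) : ℚ_[p])‖ * ‖((r+1).choose i : ℚ_[p])‖ * (p:ℝ)^(-(r+1-i:ℕ) : ℤ)
        ≤ 1 * 1 * (p:ℝ)^(-(r+1-i:ℕ) : ℤ) := by
          apply mul_le_mul_of_nonneg_right _ (by positivity)
          exact mul_le_mul hb1 (norm_nat_le_one' p _) (norm_nonneg _) zero_le_one
      _ = (p:ℝ)^(-(r+1-i:ℕ) : ℤ) := by ring
      _ ≤ (p:ℝ)^(-(6:ℤ)) := by
          apply zpow_le_zpow_right₀ (le_of_lt hp1)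
          omega
end
end

section
/- Let p ≥ 11 be a prime with p ≡ 3 (mod 4). For even k with 4 ≤ k ≤ p−5 set A_k = C(p,k)·i^k·S_{p−k}·S_k + C(p,k+1)·i^{k+1}·S_{p−k−1}·S_{k+1}, where S_r = ∑_{t=1}^{p-1} t^r. Then A_k ≡ (p³/2)·(p−k)·C(p,k)·i^k·(1+i)·B_k·B_{p−k−1} (mod p⁶) in ℤ_(p)[i], and the pairing k ↦ p−1−k gives A_{p−1−k} ≡ −A_k (mod p⁶); consequently ∑_{k even, 4 ≤ k ≤ p−5} A_k ≡ 0 (mod p⁶). -/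
noncomputable section

/-- The paired bulk term
`A_k = C(p,k) i^k S_{p-k} S_k + C(p,k+1) i^{k+1} S_{p-k-1} S_{k+1}` in ℤ[i]. -/
def Ak (p k : ℕ) : GaussianInt :=
  (p.choose k : GaussianInt) * Ig ^ k * (Sps (p - k) (p - 1) : GaussianInt) * (Sps k (p - 1) : GaussianInt) +
  (p.choose (k + 1) : GaussianInt) * Ig ^ (k + 1) * (Sps (p - k - 1) (p - 1) : GaussianInt) *
    (Sps (k + 1) (p - 1) : GaussianInt)

/-!
Expand the power sums by Faulhaber's formula `(r + 1) S_r = ∑ B_j C(r + 1, j) p ^ (r + 1 - j)`.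
Since the Bernoulli numbers `B_j` with `j ≤ p - 2` are `p`-integral (which follows from the same
formula by induction) and those of odd index `≥ 3` vanish, the leading terms give
`S_k ≡ p B_k (mod p³)` for even `k` and `2 S_r ≡ r B_{r-1} p² (mod p⁴)` for odd `r`. As
`p ∣ C(p, k)` and `p ∣ S_k`, both products in `A_k` then agree with the main term modulo `p⁶`,
the second after `(k + 1) C(p, k + 1) = (p - k) C(p, k)`. For `p ≡ 3 (mod 4)` the main terms of
`k` and `p - 1 - k` cancel, and since `k ↦ p - 1 - k` is an involution of the range of
summation, twice the sum is a sum of such cancelling pairs.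
-/

open Finset

namespace GaussianPowerSum

lemma norm_sum_le_of_involution {K ι : Type*} [NormedField K] [IsUltrametricDist K]
    {s : Finset ι} {σ : ι → ι} (hσ : ∀ i ∈ s, σ i ∈ s) (hσσ : ∀ i ∈ s, σ (σ i) = i)
    (h2 : ‖(2 : K)‖ = 1)
    {g : ι → K} {c : ℝ} (hc : 0 ≤ c) (hg : ∀ i ∈ s, ‖g (σ i) + g i‖ ≤ c) :
    ‖∑ i ∈ s, g i‖ ≤ c := by
  have hflip : ∑ i ∈ s, g (σ i) = ∑ i ∈ s, g i :=
    sum_nbij' σ σ hσ hσ hσσ hσσ fun _ _ => rfl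
  have hdouble : (2 : K) * ∑ i ∈ s, g i = ∑ i ∈ s, (g (σ i) + g i) := by
    rw [sum_add_distrib, hflip, two_mul]
  rw [← one_mul ‖_‖, ← h2, ← norm_mul, hdouble]
  exact IsUltrametricDist.norm_sum_le_of_forall_le_of_nonneg hc hg

lemma natCast_succ_mul_choose_succ {R : Type*} [CommRing R] {n k : ℕ} (hk : k ≤ n) :
    ((k : R) + 1) * n.choose (k + 1) = ((n : R) - k) * n.choose k := by
  have h := congrArg ((↑) : ℕ → R) (Nat.choose_succ_right_eq n k)
  push_cast [Nat.cast_sub hk] at h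
  linear_combination h

lemma Sps_eq_sum_range {r : ℕ} (hr : r ≠ 0) (N : ℕ) :
    Sps r N = ∑ t ∈ range (N + 1), (t : ℤ) ^ r := by
  have hrange : range (N + 1) = insert 0 (Icc 1 N) := by
    ext t; simp only [mem_range, mem_insert, mem_Icc]; omega
  rw [hrange, sum_insert (by simp), Sps, Nat.cast_zero, zero_pow hr, zero_add]

lemma reflect_mem_range {p k : ℕ} (hp : p % 2 = 1) (hk : Even k) (h4 : 4 ≤ k) (h5 : k ≤ p - 5) :
    Even (p - 1 - k) ∧ 4 ≤ p - 1 - k ∧ p - 1 - k ≤ p - 5 :=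
  ⟨Nat.even_iff.2 (by have := Nat.even_iff.1 hk; omega), by omega, by omega⟩

lemma Ig_sq : Ig ^ 2 = -1 := by
  ext <;> simp [Ig, sq]

lemma Ig_pow_of_even {k : ℕ} (hk : Even k) : Ig ^ k = (((-1) ^ (k / 2) : ℤ) : GaussianInt) := by
  obtain ⟨t, rfl⟩ := hk
  rw [← two_mul, pow_mul, Ig_sq, Nat.mul_div_cancel_left t two_pos]
  push_cast; rfl

lemma re_Ak_of_even {p k : ℕ} (hk : Even k) :
    (Ak p k).re = (-1) ^ (k / 2) * (p.choose k * Sps (p - k) (p - 1) * Sps k (p - 1)) := by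
  rw [Ak, pow_succ, Ig_pow_of_even hk]
  generalize ((-1 : ℤ) ^ (k / 2)) = s
  simp only [Ig, Zsqrtd.re_add, Zsqrtd.re_mul, Zsqrtd.im_mul, Zsqrtd.re_intCast, Zsqrtd.im_intCast,
    Zsqrtd.re_natCast, Zsqrtd.im_natCast]
  ring

lemma im_Ak_of_even {p k : ℕ} (hk : Even k) :
    (Ak p k).im =
      (-1) ^ (k / 2) * (p.choose (k + 1) * Sps (p - k - 1) (p - 1) * Sps (k + 1) (p - 1)) := by
  rw [Ak, pow_succ, Ig_pow_of_even hk]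
  generalize ((-1 : ℤ) ^ (k / 2)) = s
  simp only [Ig, Zsqrtd.im_add, Zsqrtd.re_mul, Zsqrtd.im_mul, Zsqrtd.re_intCast, Zsqrtd.im_intCast,
    Zsqrtd.re_natCast, Zsqrtd.im_natCast]
  ring

variable {p : ℕ} [hp : Fact p.Prime]

lemma norm_le_zpow_of_le {x : ℚ_[p]} {a b : ℤ} (hx : ‖x‖ ≤ (p : ℝ) ^ (-a)) (hba : b ≤ a) :
    ‖x‖ ≤ (p : ℝ) ^ (-b) :=
  hx.trans <| zpow_le_zpow_right₀ (mod_cast hp.out.one_le) (by omega)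

lemma norm_mul_le_zpow {x y : ℚ_[p]} {a b n : ℤ} (hx : ‖x‖ ≤ (p : ℝ) ^ (-a))
    (hy : ‖y‖ ≤ (p : ℝ) ^ (-b)) (hn : n ≤ a + b) : ‖x * y‖ ≤ (p : ℝ) ^ (-n) := by
  refine norm_le_zpow_of_le ?_ hn
  rw [neg_add, zpow_add₀ (mod_cast hp.out.ne_zero)]
  exact norm_mul_le_of_le hx hy

lemma norm_mul_sub_mul_le {x y x₀ y₀ : ℚ_[p]} {a b c d n : ℤ}
    (hx : ‖x‖ ≤ (p : ℝ) ^ (-a)) (hy : ‖y - y₀‖ ≤ (p : ℝ) ^ (-b))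
    (hx₀ : ‖x - x₀‖ ≤ (p : ℝ) ^ (-c)) (hy₀ : ‖y₀‖ ≤ (p : ℝ) ^ (-d))
    (hab : n ≤ a + b) (hcd : n ≤ c + d) :
    ‖x * y - x₀ * y₀‖ ≤ (p : ℝ) ^ (-n) := by
  rw [show x * y - x₀ * y₀ = x * (y - y₀) + (x - x₀) * y₀ by ring]
  exact (IsUltrametricDist.norm_add_le_max _ _).trans <|
    max_le (norm_mul_le_zpow hx hy hab) (norm_mul_le_zpow hx₀ hy₀ hcd)

lemma norm_natCast_eq_one {n : ℕ} (h0 : n ≠ 0) (hn : n < p) : ‖(n : ℚ_[p])‖ = 1 :=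
  Padic.norm_natCast_eq_one_iff.2 (Nat.coprime_of_lt_prime h0 hn hp.out)

lemma norm_natCast_mul {n : ℕ} (h0 : n ≠ 0) (hn : n < p) (x : ℚ_[p]) :
    ‖(n : ℚ_[p]) * x‖ = ‖x‖ := by
  rw [norm_mul, norm_natCast_eq_one h0 hn, one_mul]

lemma norm_two_eq_one (h2 : 2 < p) : ‖(2 : ℚ_[p])‖ = 1 := by
  exact_mod_cast norm_natCast_eq_one (p := p) two_ne_zero h2

lemma norm_intCast_le_of_dvd {z : ℤ} (h : (p : ℤ) ∣ z) : ‖(z : ℚ_[p])‖ ≤ (p : ℝ) ^ (-1 : ℤ) := by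
  simpa using (Padic.norm_int_le_pow_iff_dvd z 1).2 (by simpa using h)

lemma norm_choose_le {k : ℕ} (h0 : k ≠ 0) (hk : k < p) :
    ‖(p.choose k : ℚ_[p])‖ ≤ (p : ℝ) ^ (-1 : ℤ) := by
  simpa using norm_intCast_le_of_dvd (p := p) (z := p.choose k)
    (Int.natCast_dvd_natCast.2 (hp.out.dvd_choose_self h0 hk))

lemma norm_sum_mul_pow_le {ι : Type*} {s : Finset ι} {c : ι → ℚ_[p]} {d : ι → ℕ} {m : ℕ}
    (hc : ∀ i ∈ s, ‖c i‖ ≤ 1) (hd : ∀ i ∈ s, m ≤ d i) :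
    ‖∑ i ∈ s, c i * (p : ℚ_[p]) ^ d i‖ ≤ (p : ℝ) ^ (-m : ℤ) := by
  refine IsUltrametricDist.norm_sum_le_of_forall_le_of_nonneg (by positivity) fun i hi => ?_
  rw [norm_mul, Padic.norm_p_pow]
  exact (mul_le_of_le_one_left (by positivity) (hc i hi)).trans <|
    zpow_le_zpow_right₀ (mod_cast hp.out.one_le) (by have := hd i hi; omega)

lemma prime_dvd_Sps {n : ℕ} (h0 : n ≠ 0) (hn : n < p - 1) : (p : ℤ) ∣ Sps n (p - 1) := by
  rw [← ZMod.intCast_zmod_eq_zero_iff_dvd, Sps_eq_sum_range h0, Nat.sub_add_cancel hp.out.one_le]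
  push_cast
  rw [show ∑ t ∈ range p, ((t : ZMod p)) ^ n = ∑ x : ZMod p, x ^ n from
    sum_nbij' (fun t => (t : ZMod p)) ZMod.val (fun _ _ => mem_univ _)
      (fun x _ => mem_range.2 (ZMod.val_lt x)) (fun _ ht => ZMod.val_cast_of_lt (mem_range.1 ht))
      (fun x _ => ZMod.natCast_zmod_val x) fun _ _ => rfl]
  exact FiniteField.sum_pow_lt_card_sub_one (K := ZMod p) n (by rwa [ZMod.card])

lemma norm_Sps_le {n : ℕ} (h0 : n ≠ 0) (hn : n < p - 1) :
    ‖(Sps n (p - 1) : ℚ_[p])‖ ≤ (p : ℝ) ^ (-1 : ℤ) :=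
  norm_intCast_le_of_dvd (prime_dvd_Sps h0 hn)

lemma faulhaber {r : ℕ} (hr : r ≠ 0) :
    ((r : ℚ_[p]) + 1) * Sps r (p - 1) = ∑ j ∈ range (r + 1),
      (bernoulli j : ℚ_[p]) * (r + 1).choose j * (p : ℚ_[p]) ^ (r + 1 - j) := by
  have h : ((r : ℚ) + 1) * Sps r (p - 1) =
      ∑ j ∈ range (r + 1), bernoulli j * (r + 1).choose j * (p : ℚ) ^ (r + 1 - j) := by
    rw [Sps_eq_sum_range hr, Nat.sub_add_cancel hp.out.one_le]
    push_cast
    rw [sum_range_pow, mul_sum]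
    refine sum_congr rfl fun j _ => ?_
    field_simp
  exact_mod_cast congrArg ((↑) : ℚ → ℚ_[p]) h

lemma norm_faulhaber_tail_le {r n e : ℕ} (hn : n + e = r + 1)
    (hB : ∀ j < n, ‖(bernoulli j : ℚ_[p])‖ ≤ 1) :
    ‖∑ j ∈ range n, (bernoulli j : ℚ_[p]) * (r + 1).choose j * (p : ℚ_[p]) ^ (r + 1 - j)‖ ≤
      (p : ℝ) ^ (-(e + 1 : ℕ) : ℤ) := by
  refine norm_sum_mul_pow_le (fun j hj => ?_) fun j hj => ?_
  · rw [norm_mul]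
    exact mul_le_one₀ (hB j (mem_range.1 hj)) (norm_nonneg _)
      (IsUltrametricDist.norm_natCast_le_one _ _)
  · have := mem_range.1 hj; omega

lemma norm_bernoulli_le_one {n : ℕ} (hn : n ≤ p - 2) : ‖(bernoulli n : ℚ_[p])‖ ≤ 1 := by
  induction n using Nat.strong_induction_on with
  | _ n ih =>
  rcases Nat.eq_zero_or_pos n with rfl | hn0
  · simp
  have hcast : ((n + 1 : ℕ) : ℚ_[p]) = (n : ℚ_[p]) + 1 := by push_cast; rfl
  have hsplit := faulhaber (p := p) hn0.ne'
  rw [sum_range_succ, Nat.choose_succ_self_right, Nat.add_sub_cancel_left, pow_one] at hsplit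
  -- `B_n (n + 1) p` is `(n + 1) S_n` (divisible by `p`) minus terms divisible by `p²`
  have hBp : ‖(bernoulli n : ℚ_[p]) * (p : ℚ_[p])‖ ≤ (p : ℝ) ^ (-1 : ℤ) := by
    rw [← norm_natCast_mul (n := n + 1) (by omega) (by omega), hcast,
      show ((n : ℚ_[p]) + 1) * ((bernoulli n : ℚ_[p]) * p) = ((n : ℚ_[p]) + 1) * Sps n (p - 1) -
        ∑ j ∈ range n, (bernoulli j : ℚ_[p]) * (n + 1).choose j * (p : ℚ_[p]) ^ (n + 1 - j) by
          rw [hsplit, ← hcast]; ring]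
    rw [sub_eq_add_neg]
    refine (IsUltrametricDist.norm_add_le_max _ _).trans <| max_le ?_ ?_
    · rw [← hcast, norm_natCast_mul (by omega) (by omega)]
      exact norm_Sps_le hn0.ne' (by omega)
    · rw [norm_neg]
      exact norm_le_zpow_of_le (norm_faulhaber_tail_le (e := 1) rfl fun j hj => ih j hj (by omega))
        (by norm_num)
  rw [norm_mul, Padic.norm_p, zpow_neg_one] at hBp
  exact le_of_mul_le_mul_right (by simpa using hBp) (by simp [hp.out.pos])

lemma norm_Sps_sub_le {k : ℕ} (hk : Even k) (h4 : 4 ≤ k) (hkp : k + 1 < p) :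
    ‖(Sps k (p - 1) : ℚ_[p]) - p * bernoulli k‖ ≤ (p : ℝ) ^ (-3 : ℤ) := by
  obtain ⟨m, rfl⟩ : ∃ m, k = m + 2 := ⟨k - 2, by omega⟩
  have hB : bernoulli (m + 1) = 0 :=
    bernoulli_eq_zero_of_odd (by simpa [parity_simps] using hk) (by omega)
  have hsplit := faulhaber (p := p) (r := m + 2) (by omega)
  rw [sum_range_succ, sum_range_succ, hB, Nat.choose_succ_self_right,
    show m + 2 + 1 - (m + 2) = 1 by omega, pow_one] at hsplit
  rw [← norm_natCast_mul (n := m + 3) (by omega) (by omega),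
    show ((m + 3 : ℕ) : ℚ_[p]) * ((Sps (m + 2) (p - 1) : ℚ_[p]) - p * bernoulli (m + 2)) =
      ∑ j ∈ range (m + 1), (bernoulli j : ℚ_[p]) * (m + 2 + 1).choose j *
        (p : ℚ_[p]) ^ (m + 2 + 1 - j) by
      push_cast at hsplit ⊢
      linear_combination hsplit]
  exact norm_faulhaber_tail_le (e := 2) (by omega) fun j hj => norm_bernoulli_le_one (by omega)

lemma norm_two_mul_Sps_sub_le {r : ℕ} (hr : Odd r) (h5 : 5 ≤ r) (hrp : r + 1 < p) :
    ‖2 * (Sps r (p - 1) : ℚ_[p]) - r * bernoulli (r - 1) * (p : ℚ_[p]) ^ 2‖ ≤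
      (p : ℝ) ^ (-4 : ℤ) := by
  obtain ⟨m, rfl⟩ : ∃ m, r = m + 3 := ⟨r - 3, by omega⟩
  have hB₁ : bernoulli (m + 1) = 0 :=
    bernoulli_eq_zero_of_odd (by simpa [parity_simps] using hr) (by omega)
  have hB₃ : bernoulli (m + 3) = 0 := bernoulli_eq_zero_of_odd hr (by omega)
  have hchoose : 2 * ((m + 3 + 1).choose (m + 2) : ℚ_[p]) = (m + 4) * (m + 3) := by
    have h := Nat.choose_succ_right_eq (m + 3 + 1) (m + 2)
    rw [Nat.choose_succ_self_right, show m + 3 + 1 - (m + 2) = 2 by omega] at h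
    exact_mod_cast (by linarith : 2 * (m + 3 + 1).choose (m + 2) = (m + 4) * (m + 3))
  have hsplit := faulhaber (p := p) (r := m + 3) (by omega)
  rw [sum_range_succ, sum_range_succ, sum_range_succ, hB₁, hB₃,
    show m + 3 + 1 - (m + 2) = 2 by omega] at hsplit
  rw [← norm_natCast_mul (n := m + 4) (by omega) (by omega),
    show ((m + 4 : ℕ) : ℚ_[p]) * (2 * (Sps (m + 3) (p - 1) : ℚ_[p]) -
        ((m + 3 : ℕ) : ℚ_[p]) * bernoulli (m + 3 - 1) * (p : ℚ_[p]) ^ 2) =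
      2 * ∑ j ∈ range (m + 1), (bernoulli j : ℚ_[p]) * (m + 3 + 1).choose j *
        (p : ℚ_[p]) ^ (m + 3 + 1 - j) by
      push_cast at hsplit ⊢
      linear_combination 2 * hsplit + (bernoulli (m + 2) : ℚ_[p]) * p ^ 2 * hchoose,
    norm_mul, show (2 : ℚ_[p]) = ((2 : ℕ) : ℚ_[p]) by norm_num,
    norm_natCast_eq_one (by omega) (by omega), one_mul]
  exact norm_faulhaber_tail_le (e := 3) (by omega) fun j hj => norm_bernoulli_le_one (by omega)

lemma norm_Sps_mul_two_mul_Sps_sub_le {e o : ℕ} (he : Even e) (he4 : 4 ≤ e) (hep : e + 1 < p)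
    (ho : Odd o) (ho5 : 5 ≤ o) (hop : o + 1 < p) :
    ‖(Sps e (p - 1) : ℚ_[p]) * (2 * Sps o (p - 1)) -
        p * bernoulli e * (o * bernoulli (o - 1) * (p : ℚ_[p]) ^ 2)‖ ≤ (p : ℝ) ^ (-5 : ℤ) := by
  have hmain : ‖(o : ℚ_[p]) * bernoulli (o - 1) * (p : ℚ_[p]) ^ 2‖ ≤ (p : ℝ) ^ (-2 : ℤ) := by
    rw [norm_mul, Padic.norm_p_pow]
    refine mul_le_of_le_one_left (by positivity) ?_
    rw [norm_mul]
    exact mul_le_one₀ (IsUltrametricDist.norm_natCast_le_one _ _) (norm_nonneg _)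
      (norm_bernoulli_le_one (by omega))
  exact norm_mul_sub_mul_le (a := 1) (b := 4) (c := 3) (d := 2)
    (norm_Sps_le (by omega) (by omega)) (norm_two_mul_Sps_sub_le ho ho5 hop)
    (norm_Sps_sub_le he he4 hep) hmain (by norm_num) (by norm_num)

lemma norm_choose_mul_Sps_mul_Sps_sub_le {k : ℕ} (hk : Even k) (h4 : 4 ≤ k) (h5 : k ≤ p - 5) :
    ‖(p.choose k : ℚ_[p]) * Sps (p - k) (p - 1) * Sps k (p - 1) -
        (p : ℚ_[p]) ^ 3 / 2 * (p - k) * p.choose k * bernoulli k * bernoulli (p - k - 1)‖ ≤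
      (p : ℝ) ^ (-6 : ℤ) := by
  have hp2 := Nat.odd_iff.1 (hp.out.odd_of_ne_two (by omega))
  have hodd : Odd (p - k) := Nat.odd_iff.2 (by have := Nat.even_iff.1 hk; omega)
  have h := norm_Sps_mul_two_mul_Sps_sub_le (p := p) hk h4 (by omega) hodd (by omega) (by omega)
  rw [← one_mul ‖_‖, ← norm_two_eq_one (p := p) (by omega), ← norm_mul]
  calc _ = ‖(p.choose k : ℚ_[p]) * ((Sps k (p - 1) : ℚ_[p]) * (2 * Sps (p - k) (p - 1)) -
        p * bernoulli k * ((p - k : ℕ) * bernoulli (p - k - 1) * (p : ℚ_[p]) ^ 2))‖ := by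
        rw [Nat.cast_sub (by omega)]; ring_nf
    _ ≤ _ := norm_mul_le_zpow (norm_choose_le (by omega) (by omega)) h (by norm_num)

lemma norm_choose_succ_mul_Sps_mul_Sps_sub_le {k : ℕ} (hk : Even k) (h4 : 4 ≤ k)
    (h5 : k ≤ p - 5) :
    ‖(p.choose (k + 1) : ℚ_[p]) * Sps (p - k - 1) (p - 1) * Sps (k + 1) (p - 1) -
        (p : ℚ_[p]) ^ 3 / 2 * (p - k) * p.choose k * bernoulli k * bernoulli (p - k - 1)‖ ≤
      (p : ℝ) ^ (-6 : ℤ) := by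
  have hp2 := Nat.odd_iff.1 (hp.out.odd_of_ne_two (by omega))
  have heven : Even (p - k - 1) := Nat.even_iff.2 (by have := Nat.even_iff.1 hk; omega)
  have h := norm_Sps_mul_two_mul_Sps_sub_le (p := p) (e := p - k - 1) (o := k + 1) heven
    (by omega) (by omega) hk.add_one (by omega) (by omega)
  rw [Nat.add_sub_cancel] at h
  have hid := natCast_succ_mul_choose_succ (R := ℚ_[p]) (n := p) (k := k) (by omega)
  rw [← one_mul ‖_‖, ← norm_two_eq_one (p := p) (by omega), ← norm_mul]
  calc _ = ‖(p.choose (k + 1) : ℚ_[p]) * ((Sps (p - k - 1) (p - 1) : ℚ_[p]) *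
        (2 * Sps (k + 1) (p - 1)) -
        p * bernoulli (p - k - 1) * ((k + 1 : ℕ) * bernoulli k * (p : ℚ_[p]) ^ 2))‖ := by
        congr 1; push_cast
        linear_combination ((p : ℚ_[p]) ^ 3 * bernoulli k * bernoulli (p - k - 1)) * hid
    _ ≤ _ := norm_mul_le_zpow (norm_choose_le (by omega) (by omega)) h (by norm_num)

-- the paper's `(p³/2)(p - k) C(p, k) i^k B_k B_{p-k-1}`, with `i^k = (-1)^(k/2)` for even `k`
def mainTerm (p : ℕ) [Fact p.Prime] (k : ℕ) : ℚ_[p] :=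
  (p : ℚ_[p]) ^ 3 / 2 * ((p : ℚ_[p]) - (k : ℚ_[p])) * (p.choose k : ℚ_[p]) *
    (-1 : ℚ_[p]) ^ (k / 2) * ((bernoulli k : ℚ) : ℚ_[p]) * ((bernoulli (p - k - 1) : ℚ) : ℚ_[p])

lemma norm_re_Ak_sub_mainTerm_le {k : ℕ} (hk : Even k) (h4 : 4 ≤ k) (h5 : k ≤ p - 5) :
    ‖((Ak p k).re : ℚ_[p]) - mainTerm p k‖ ≤ (p : ℝ) ^ (-6 : ℤ) := by
  rw [re_Ak_of_even hk, mainTerm]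
  push_cast
  calc _ = ‖(-1 : ℚ_[p]) ^ (k / 2)‖ * ‖(p.choose k : ℚ_[p]) * Sps (p - k) (p - 1) * Sps k (p - 1) -
        (p : ℚ_[p]) ^ 3 / 2 * (p - k) * p.choose k * bernoulli k * bernoulli (p - k - 1)‖ := by
        rw [← norm_mul]; ring_nf
    _ ≤ _ := by
        rw [norm_pow, norm_neg, norm_one, one_pow, one_mul]
        exact norm_choose_mul_Sps_mul_Sps_sub_le hk h4 h5

lemma norm_im_Ak_sub_mainTerm_le {k : ℕ} (hk : Even k) (h4 : 4 ≤ k) (h5 : k ≤ p - 5) :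
    ‖((Ak p k).im : ℚ_[p]) - mainTerm p k‖ ≤ (p : ℝ) ^ (-6 : ℤ) := by
  rw [im_Ak_of_even hk, mainTerm]
  push_cast
  calc _ = ‖(-1 : ℚ_[p]) ^ (k / 2)‖ *
        ‖(p.choose (k + 1) : ℚ_[p]) * Sps (p - k - 1) (p - 1) * Sps (k + 1) (p - 1) -
        (p : ℚ_[p]) ^ 3 / 2 * (p - k) * p.choose k * bernoulli k * bernoulli (p - k - 1)‖ := by
        rw [← norm_mul]; ring_nf
    _ ≤ _ := by
        rw [norm_pow, norm_neg, norm_one, one_pow, one_mul]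
        exact norm_choose_succ_mul_Sps_mul_Sps_sub_le hk h4 h5

-- `(p - 1) / 2` is odd, so the signs `i ^ k` and `i ^ (p - 1 - k)` are opposite
lemma mainTerm_reflect_add (h3 : p % 4 = 3) {k : ℕ} (hk : Even k) (hkp : k < p) :
    mainTerm p (p - 1 - k) + mainTerm p k = 0 := by
  have hsign : (-1 : ℚ_[p]) ^ ((p - 1 - k) / 2) * (-1) ^ (k / 2) = -1 := by
    rw [← pow_add, Odd.neg_one_pow (Nat.odd_iff.2 (by have := Nat.even_iff.1 hk; omega))]
  have hsq : (-1 : ℚ_[p]) ^ (k / 2) * (-1) ^ (k / 2) = 1 := by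
    rw [← pow_add, Even.neg_one_pow ⟨_, rfl⟩]
  have hflip : (-1 : ℚ_[p]) ^ ((p - 1 - k) / 2) = -(-1) ^ (k / 2) := by
    linear_combination (-1 : ℚ_[p]) ^ (k / 2) * hsign - (-1 : ℚ_[p]) ^ ((p - 1 - k) / 2) * hsq
  have hid := natCast_succ_mul_choose_succ (R := ℚ_[p]) (n := p) (k := k) hkp.le
  rw [mainTerm, mainTerm, hflip, Nat.choose_symm_of_eq_add (by omega : p = (p - 1 - k) + (k + 1)),
    show p - (p - 1 - k) - 1 = k by omega, show p - 1 - k = p - k - 1 by omega,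
    Nat.cast_sub (by omega), Nat.cast_sub (by omega)]
  push_cast
  linear_combination
    -(p : ℚ_[p]) ^ 3 / 2 * (-1) ^ (k / 2) * bernoulli k * bernoulli (p - k - 1) * hid

lemma norm_component_reflect_add_le (h3 : p % 4 = 3) (f : GaussianInt →+ ℤ)
    (hf : ∀ k, Even k → 4 ≤ k → k ≤ p - 5 →
      ‖(f (Ak p k) : ℚ_[p]) - mainTerm p k‖ ≤ (p : ℝ) ^ (-6 : ℤ)) :
    ∀ k, Even k → 4 ≤ k → k ≤ p - 5 →
      ‖(f (Ak p (p - 1 - k) + Ak p k) : ℚ_[p])‖ ≤ (p : ℝ) ^ (-6 : ℤ) := by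
  intro k hk h4 h5
  obtain ⟨hk', h4', h5'⟩ := reflect_mem_range (p := p) (by omega) hk h4 h5
  rw [map_add, Int.cast_add, show (f (Ak p (p - 1 - k)) : ℚ_[p]) + f (Ak p k) =
      ((f (Ak p (p - 1 - k)) : ℚ_[p]) - mainTerm p (p - 1 - k)) + (f (Ak p k) - mainTerm p k) by
    linear_combination mainTerm_reflect_add h3 hk (by omega)]
  exact (IsUltrametricDist.norm_add_le_max _ _).trans (max_le (hf _ hk' h4' h5') (hf _ hk h4 h5))

lemma norm_component_sum_le (hodd : p % 2 = 1) (f : GaussianInt →+ ℤ)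
    (hpair : ∀ k, Even k → 4 ≤ k → k ≤ p - 5 →
      ‖(f (Ak p (p - 1 - k) + Ak p k) : ℚ_[p])‖ ≤ (p : ℝ) ^ (-6 : ℤ)) :
    ‖(f (∑ k ∈ (Icc 4 (p - 5)).filter Even, Ak p k) : ℚ_[p])‖ ≤ (p : ℝ) ^ (-6 : ℤ) := by
  have hmem : ∀ k ∈ (Icc 4 (p - 5)).filter Even, Even k ∧ 4 ≤ k ∧ k ≤ p - 5 := fun k hk => by
    simp only [mem_filter, mem_Icc] at hk
    exact ⟨hk.2, hk.1⟩
  rw [map_sum, Int.cast_sum]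
  refine norm_sum_le_of_involution (σ := fun k => p - 1 - k) (fun k hk => ?_) (fun k hk => ?_)
    (norm_two_eq_one (by have := hp.out.two_le; omega)) (by positivity) fun k hk => ?_
  · obtain ⟨hk', h4', h5'⟩ := reflect_mem_range hodd (hmem k hk).1 (hmem k hk).2.1 (hmem k hk).2.2
    simp only [mem_filter, mem_Icc]
    exact ⟨⟨h4', h5'⟩, hk'⟩
  · have := hmem k hk; omega
  · rw [← Int.cast_add, ← map_add]
    exact hpair k (hmem k hk).1 (hmem k hk).2.1 (hmem k hk).2.2

end GaussianPowerSum

theorem stmt19_general (p : ℕ) [Fact p.Prime] (h3 : p % 4 = 3) :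
    (∀ k : ℕ, Even k → 4 ≤ k → k ≤ p - 5 →
      (‖(((Ak p k).re : ℚ_[p]) -
          (p : ℚ_[p]) ^ 3 / 2 * ((p : ℚ_[p]) - (k : ℚ_[p])) * (p.choose k : ℚ_[p]) *
            (-1 : ℚ_[p]) ^ (k / 2) * ((bernoulli k : ℚ) : ℚ_[p]) *
            ((bernoulli (p - k - 1) : ℚ) : ℚ_[p]))‖ ≤ (p : ℝ) ^ (-(6 : ℤ)) ∧
        ‖(((Ak p k).im : ℚ_[p]) -
          (p : ℚ_[p]) ^ 3 / 2 * ((p : ℚ_[p]) - (k : ℚ_[p])) * (p.choose k : ℚ_[p]) *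
            (-1 : ℚ_[p]) ^ (k / 2) * ((bernoulli k : ℚ) : ℚ_[p]) *
            ((bernoulli (p - k - 1) : ℚ) : ℚ_[p]))‖ ≤ (p : ℝ) ^ (-(6 : ℤ))) ∧
      (‖(((Ak p (p - 1 - k) + Ak p k).re : ℚ_[p]))‖ ≤ (p : ℝ) ^ (-(6 : ℤ)) ∧
        ‖(((Ak p (p - 1 - k) + Ak p k).im : ℚ_[p]))‖ ≤ (p : ℝ) ^ (-(6 : ℤ)))) ∧
    (‖(((∑ k ∈ (Finset.Icc 4 (p - 5)).filter Even, Ak p k).re : ℚ_[p]))‖ ≤ (p : ℝ) ^ (-(6 : ℤ)) ∧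
      ‖(((∑ k ∈ (Finset.Icc 4 (p - 5)).filter Even, Ak p k).im : ℚ_[p]))‖ ≤ (p : ℝ) ^ (-(6 : ℤ))) := by
  open GaussianPowerSum in (
  let re : GaussianInt →+ ℤ := AddMonoidHom.mk' Zsqrtd.re Zsqrtd.re_add
  let im : GaussianInt →+ ℤ := AddMonoidHom.mk' Zsqrtd.im Zsqrtd.im_add
  have hre := norm_component_reflect_add_le h3 re fun _ => norm_re_Ak_sub_mainTerm_le
  have him := norm_component_reflect_add_le h3 im fun _ => norm_im_Ak_sub_mainTerm_le
  exact ⟨fun k hk h4 h5 =>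
      ⟨⟨norm_re_Ak_sub_mainTerm_le hk h4 h5, norm_im_Ak_sub_mainTerm_le hk h4 h5⟩,
        hre k hk h4 h5, him k hk h4 h5⟩,
    norm_component_sum_le (by omega) re hre, norm_component_sum_le (by omega) im him⟩)

theorem stmt19 (p : ℕ) [Fact p.Prime] (hp11 : 11 ≤ p) (h3 : p % 4 = 3) :
    (∀ k : ℕ, Even k → 4 ≤ k → k ≤ p - 5 →
      (‖(((Ak p k).re : ℚ_[p]) -
          (p : ℚ_[p]) ^ 3 / 2 * ((p : ℚ_[p]) - (k : ℚ_[p])) * (p.choose k : ℚ_[p]) *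
            (-1 : ℚ_[p]) ^ (k / 2) * ((bernoulli k : ℚ) : ℚ_[p]) *
            ((bernoulli (p - k - 1) : ℚ) : ℚ_[p]))‖ ≤ (p : ℝ) ^ (-(6 : ℤ)) ∧
        ‖(((Ak p k).im : ℚ_[p]) -
          (p : ℚ_[p]) ^ 3 / 2 * ((p : ℚ_[p]) - (k : ℚ_[p])) * (p.choose k : ℚ_[p]) *
            (-1 : ℚ_[p]) ^ (k / 2) * ((bernoulli k : ℚ) : ℚ_[p]) *
            ((bernoulli (p - k - 1) : ℚ) : ℚ_[p]))‖ ≤ (p : ℝ) ^ (-(6 : ℤ))) ∧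
      (‖(((Ak p (p - 1 - k) + Ak p k).re : ℚ_[p]))‖ ≤ (p : ℝ) ^ (-(6 : ℤ)) ∧
        ‖(((Ak p (p - 1 - k) + Ak p k).im : ℚ_[p]))‖ ≤ (p : ℝ) ^ (-(6 : ℤ)))) ∧
    (‖(((∑ k ∈ (Finset.Icc 4 (p - 5)).filter Even, Ak p k).re : ℚ_[p]))‖ ≤ (p : ℝ) ^ (-(6 : ℤ)) ∧
      ‖(((∑ k ∈ (Finset.Icc 4 (p - 5)).filter Even, Ak p k).im : ℚ_[p]))‖ ≤ (p : ℝ) ^ (-(6 : ℤ))) :=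
  stmt19_general p h3
end
end
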